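/- Let M,N be positive integers, let Ω ⊆ {0,…,M−1}×{0,…,N−1} with complement Λ = Ω^c of cardinality N_ω, and let N_t be a positive integer with 2·N_t·N_ω < MN. Let f : {0,…,M−1}×{0,…,N−1} → ℍ have at most N_t nonzero values, let n be a noise signal with ‖n‖ ≤ ε, and set r = P_Ω f + n. If f̃ has at most N_t nonzero values and ‖r − P_Ω f̃‖ ≤ ε, then ‖f − f̃‖ ≤ 2ε / √(1 − 2·N_t·N_ω/(MN)). -/

import Mathlib

open scoped BigOperators Classical

noncomputable def qI : Quaternion ℝ := ⟨0, 1, 0, 0⟩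
noncomputable def qJ : Quaternion ℝ := ⟨0, 0, 1, 0⟩

/-- exp(θ q) = cos θ + (sin θ) q for a (unit pure) quaternion q. -/
noncomputable def qexp (q : Quaternion ℝ) (θ : ℝ) : Quaternion ℝ :=
  ((Real.cos θ : ℝ) : Quaternion ℝ) + (Real.sin θ) • q

/-- Two-sided discrete quaternion Fourier transform. -/
noncomputable def dqft (M N : ℕ) (f : Fin M → Fin N → Quaternion ℝ)
    (u : Fin M) (v : Fin N) : Quaternion ℝ :=
  ((Real.sqrt (M * N))⁻¹ : ℝ) •
    ∑ t : Fin M, ∑ s : Fin N,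
      qexp qI (-(2 * Real.pi * u.val * t.val / M)) * f t s *
        qexp qJ (-(2 * Real.pi * v.val * s.val / N))

/-- Ideal bandpass operator limiting the signal to frequencies in `Ω`. -/
noncomputable def bandpass (M N : ℕ) (Ω : Finset (Fin M × Fin N))
    (f : Fin M → Fin N → Quaternion ℝ) (t : Fin M) (s : Fin N) : Quaternion ℝ :=
  ((Real.sqrt (M * N))⁻¹ : ℝ) •
    ∑ p ∈ Ω,
      qexp qI (2 * Real.pi * p.1.val * t.val / M) * dqft M N f p.1 p.2 *
        qexp qJ (2 * Real.pi * p.2.val * s.val / N)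

/-- The ℓ² norm of a discrete quaternion signal. -/
noncomputable def l2norm (M N : ℕ) (f : Fin M → Fin N → Quaternion ℝ) : ℝ :=
  Real.sqrt (∑ t : Fin M, ∑ s : Fin N, ‖f t s‖ ^ 2)

lemma qexp_qI (θ : ℝ) : qexp qI θ = ⟨Real.cos θ, Real.sin θ, 0, 0⟩ := by
  ext <;> simp [qexp, Quaternion.re_smul] <;> simp [qI]

lemma qexp_qJ (θ : ℝ) : qexp qJ θ = ⟨Real.cos θ, 0, Real.sin θ, 0⟩ := by
  ext <;> simp [qexp, Quaternion.re_smul] <;> simp [qJ]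

lemma qexp_qI_mul (a b : ℝ) : qexp qI a * qexp qI b = qexp qI (a + b) := by
  ext <;> simp [Quaternion.re_mul, Quaternion.imI_mul, Quaternion.imJ_mul, Quaternion.imK_mul] <;> simp [qexp_qI, Quaternion.ext_iff, Real.cos_add, Real.sin_add] <;> ring

lemma qexp_qJ_mul (a b : ℝ) : qexp qJ a * qexp qJ b = qexp qJ (a + b) := by
  ext <;> simp [Quaternion.re_mul, Quaternion.imI_mul, Quaternion.imJ_mul, Quaternion.imK_mul] <;> simp [qexp_qJ, Quaternion.ext_iff, Real.cos_add, Real.sin_add] <;> ring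

lemma star_qexp_qI (a : ℝ) : star (qexp qI a) = qexp qI (-a) := by
  ext <;> simp <;> simp [qexp_qI]

lemma star_qexp_qJ (a : ℝ) : star (qexp qJ a) = qexp qJ (-a) := by
  ext <;> simp <;> simp [qexp_qJ]

lemma norm_qexp_qI (a : ℝ) : ‖qexp qI a‖ = 1 := by
  have h : ‖qexp qI a‖ * ‖qexp qI a‖ = 1 := by
    rw [← Quaternion.normSq_eq_norm_mul_self]
    rw [Quaternion.normSq_def']
    simp [qexp_qI]
  have := mul_self_eq_one_iff.1 h
  rcases this with h1 | h1
  · exact h1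
  · nlinarith [norm_nonneg (qexp qI a)]

lemma norm_qexp_qJ (a : ℝ) : ‖qexp qJ a‖ = 1 := by
  have h : ‖qexp qJ a‖ * ‖qexp qJ a‖ = 1 := by
    rw [← Quaternion.normSq_eq_norm_mul_self]
    rw [Quaternion.normSq_def']
    simp [qexp_qJ]
  have := mul_self_eq_one_iff.1 h
  rcases this with h1 | h1
  · exact h1
  · nlinarith [norm_nonneg (qexp qJ a)]

lemma re_mul_comm (a b : Quaternion ℝ) : (a * b).re = (b * a).re := by
  simp [Quaternion.re_mul]; ring

lemma complex_char_sum (n : ℕ) (hn : 0 < n) (k : ℤ) :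
    ∑ x : Fin n, Complex.exp ((2 * Real.pi * k * x / n : ℝ) * Complex.I)
      = if (n : ℤ) ∣ k then (n : ℂ) else 0 := by
  set z : ℂ := Complex.exp (((2 * Real.pi * k / n : ℝ)) * Complex.I) with hz
  have hterm : ∀ x : Fin n,
      Complex.exp ((2 * Real.pi * k * x / n : ℝ) * Complex.I) = z ^ (x : ℕ) := by
    intro x
    rw [hz, ← Complex.exp_nat_mul]
    congr 1
    push_cast
    ring
  rw [Finset.sum_congr rfl (fun x _ => hterm x), Fin.sum_univ_eq_sum_range (fun i => z ^ i)]
  by_cases hdvd : (n : ℤ) ∣ k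
  · obtain ⟨m, hm⟩ := id hdvd
    have hn' : ((n:ℝ) : ℂ) ≠ 0 := by
      norm_cast
      positivity
    have hz1 : z = 1 := by
      rw [hz, hm]
      have : ((2 * Real.pi * ((n : ℤ) * m : ℤ) / n : ℝ) : ℂ) * Complex.I
          = (m : ℤ) * (2 * Real.pi * Complex.I) := by
        push_cast
        push_cast at hn'
        field_simp
      rw [this, Complex.exp_int_mul_two_pi_mul_I]
    simp [hz1, hdvd]
  · have hz1 : z ≠ 1 := by
      intro h
      rw [hz, Complex.exp_eq_one_iff] at h
      obtain ⟨m, hm⟩ := h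
      have : ((2 * Real.pi * k / n : ℝ) : ℂ) = ((2 * Real.pi * m : ℝ) : ℂ) := by
        have hI := mul_right_cancel₀ Complex.I_ne_zero (by
          rw [hm]; push_cast; ring : ((2 * Real.pi * k / n : ℝ) : ℂ) * Complex.I
            = ((2 * Real.pi * m : ℝ) : ℂ) * Complex.I)
        exact hI
      have hr : (2 * Real.pi * k / n : ℝ) = 2 * Real.pi * m := by
        exact_mod_cast this
      have hk : (k : ℝ) = (n : ℝ) * m := by
        have hn' : (n : ℝ) ≠ 0 := by positivity
        have hpi : (2 * Real.pi) ≠ 0 := by positivity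
        field_simp at hr
        nlinarith [Real.pi_pos]
      exact hdvd ⟨m, by exact_mod_cast hk⟩
    rw [geom_sum_eq hz1]
    have hzn : z ^ n = 1 := by
      rw [hz, ← Complex.exp_nat_mul]
      have : (n : ℂ) * (((2 * Real.pi * k / n : ℝ)) * Complex.I)
          = (k : ℤ) * (2 * Real.pi * Complex.I) := by
        push_cast
        have hn' : (n : ℂ) ≠ 0 := by exact_mod_cast Nat.cast_ne_zero.2 hn.ne'
        field_simp
      rw [this, Complex.exp_int_mul_two_pi_mul_I]
    simp [hzn, hdvd]

lemma sum_cos_char (n : ℕ) (hn : 0 < n) (k : ℤ) :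
    ∑ x : Fin n, Real.cos (2 * Real.pi * k * x / n)
      = if (n : ℤ) ∣ k then (n : ℝ) else 0 := by
  have h := complex_char_sum n hn k
  have := congrArg Complex.re h
  rw [Complex.re_sum] at this
  simp only [Complex.exp_ofReal_mul_I_re] at this
  rw [this]
  split <;> simp

lemma sum_sin_char (n : ℕ) (hn : 0 < n) (k : ℤ) :
    ∑ x : Fin n, Real.sin (2 * Real.pi * k * x / n) = 0 := by
  have h := complex_char_sum n hn k
  have := congrArg Complex.im h
  rw [Complex.im_sum] at this
  simp only [Complex.exp_ofReal_mul_I_im] at this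
  rw [this]
  split <;> simp

lemma q_re_sum {ι : Type*} (s : Finset ι) (f : ι → Quaternion ℝ) :
    (∑ i ∈ s, f i).re = ∑ i ∈ s, (f i).re :=
  map_sum (QuaternionAlgebra.reₗ (R := ℝ) (c₁ := -1) (c₂ := 0) (c₃ := -1)) f s

lemma q_imI_sum {ι : Type*} (s : Finset ι) (f : ι → Quaternion ℝ) :
    (∑ i ∈ s, f i).imI = ∑ i ∈ s, (f i).imI :=
  map_sum (QuaternionAlgebra.imIₗ (R := ℝ) (c₁ := -1) (c₂ := 0) (c₃ := -1)) f s

lemma q_imJ_sum {ι : Type*} (s : Finset ι) (f : ι → Quaternion ℝ) :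
    (∑ i ∈ s, f i).imJ = ∑ i ∈ s, (f i).imJ :=
  map_sum (QuaternionAlgebra.imJₗ (R := ℝ) (c₁ := -1) (c₂ := 0) (c₃ := -1)) f s

lemma q_imK_sum {ι : Type*} (s : Finset ι) (f : ι → Quaternion ℝ) :
    (∑ i ∈ s, f i).imK = ∑ i ∈ s, (f i).imK :=
  map_sum (QuaternionAlgebra.imKₗ (R := ℝ) (c₁ := -1) (c₂ := 0) (c₃ := -1)) f s

lemma sum_qexp_qI_char (n : ℕ) (hn : 0 < n) (k : ℤ) :
    ∑ x : Fin n, qexp qI (2 * Real.pi * k * x / n)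
      = (((if (n : ℤ) ∣ k then (n : ℝ) else 0) : ℝ) : Quaternion ℝ) := by
  ext
  · rw [q_re_sum]
    simp only [qexp_qI]
    simpa using sum_cos_char n hn k
  · rw [q_imI_sum]
    simp only [qexp_qI]
    simpa using sum_sin_char n hn k
  · rw [q_imJ_sum]
    simp [qexp_qI]
  · rw [q_imK_sum]
    simp [qexp_qI]

lemma sum_qexp_qJ_char (n : ℕ) (hn : 0 < n) (k : ℤ) :
    ∑ x : Fin n, qexp qJ (2 * Real.pi * k * x / n)
      = (((if (n : ℤ) ∣ k then (n : ℝ) else 0) : ℝ) : Quaternion ℝ) := by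
  ext
  · rw [q_re_sum]
    simp only [qexp_qJ]
    simpa using sum_cos_char n hn k
  · rw [q_imI_sum]
    simp [qexp_qJ]
  · rw [q_imJ_sum]
    simp only [qexp_qJ]
    simpa using sum_sin_char n hn k
  · rw [q_imK_sum]
    simp [qexp_qJ]

lemma re_coe_mul (r : ℝ) (x : Quaternion ℝ) : (((r : Quaternion ℝ)) * x).re = r * x.re := by
  simp [Quaternion.re_mul]

lemma re_mul_coe_mid (x y : Quaternion ℝ) (r : ℝ) :
    (x * (((r : Quaternion ℝ)) * y)).re = r * (x * y).re := by
  simp [Quaternion.re_mul, Quaternion.coe_mul_eq_smul, mul_smul_comm]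

lemma key_term (α α' β β' : ℝ) (g g' : Quaternion ℝ) :
    ((qexp qI α * g * qexp qJ β) * star (qexp qI α' * g' * qexp qJ β')).re
      = (qexp qI (α - α') * (g * (qexp qJ (β - β') * star g'))).re := by
  rw [star_mul, star_mul, star_qexp_qI, star_qexp_qJ]
  have h1 : (qexp qI α * g * qexp qJ β) * (qexp qJ (-β') * (star g' * qexp qI (-α')))
      = (qexp qI α * (g * ((qexp qJ β * qexp qJ (-β')) * star g'))) * qexp qI (-α') := by
    simp only [mul_assoc]
  rw [h1, re_mul_comm, qexp_qJ_mul]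
  have h2 : qexp qI (-α') * (qexp qI α * (g * (qexp qJ (β + -β') * star g')))
      = (qexp qI (-α') * qexp qI α) * (g * (qexp qJ (β + -β') * star g')) := by
    simp only [mul_assoc]
  rw [h2, qexp_qI_mul]
  have e1 : -α' + α = α - α' := by ring
  have e2 : β + -β' = β - β' := by ring
  rw [e1, e2]

lemma fin_dvd_iff (n : ℕ) (x x' : Fin n) : (n : ℤ) ∣ ((x : ℤ) - (x' : ℤ)) ↔ x = x' := by
  constructor
  · rintro ⟨m, hm⟩
    have h1 := x.isLt
    have h2 := x'.isLt
    have hn0 : (0:ℤ) < n := by exact_mod_cast x.pos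
    have hm0 : m = 0 := by nlinarith
    rw [hm0, mul_zero] at hm
    have : (x : ℕ) = (x' : ℕ) := by omega
    exact Fin.ext this
  · rintro rfl
    simp

lemma orth_sum (M N : ℕ) (hM : 0 < M) (hN : 0 < N) (kM kN : ℤ) (g g' : Quaternion ℝ) :
    ∑ a : Fin M, ∑ b : Fin N,
      (qexp qI (2 * Real.pi * kM * a / M) *
        (g * (qexp qJ (2 * Real.pi * kN * b / N) * star g'))).re
      = (if (M : ℤ) ∣ kM then (M : ℝ) else 0) *
        ((if (N : ℤ) ∣ kN then (N : ℝ) else 0) * (g * star g').re) := by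
  have hb : ∀ a : Fin M,
      ∑ b : Fin N, (qexp qI (2 * Real.pi * kM * a / M) *
          (g * (qexp qJ (2 * Real.pi * kN * b / N) * star g'))).re
        = (if (N : ℤ) ∣ kN then (N : ℝ) else 0) *
            (qexp qI (2 * Real.pi * kM * a / M) * (g * star g')).re := by
    intro a
    rw [← q_re_sum, ← Finset.mul_sum, ← Finset.mul_sum, ← Finset.sum_mul,
      sum_qexp_qJ_char N hN kN]
    simp only [Quaternion.coe_mul_eq_smul, mul_smul_comm, Quaternion.re_smul, smul_eq_mul]
  rw [Finset.sum_congr rfl (fun a _ => hb a), ← Finset.mul_sum, ← q_re_sum,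
    ← Finset.sum_mul, sum_qexp_qI_char M hM kM, Quaternion.coe_mul_eq_smul,
    Quaternion.re_smul, smul_eq_mul]
  ring

lemma block (M N : ℕ) (hM : 0 < M) (hN : 0 < N) (σ : ℤ) (hσ : σ = 1 ∨ σ = -1)
    (p p' : Fin M × Fin N) (g g' : Quaternion ℝ) :
    ∑ a : Fin M, ∑ b : Fin N,
      ((qexp qI ((σ : ℝ) * (2 * Real.pi * p.1.val * a.val / M)) * g *
          qexp qJ ((σ : ℝ) * (2 * Real.pi * p.2.val * b.val / N))) *
        star (qexp qI ((σ : ℝ) * (2 * Real.pi * p'.1.val * a.val / M)) * g' *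
          qexp qJ ((σ : ℝ) * (2 * Real.pi * p'.2.val * b.val / N)))).re
      = if p = p' then (M * N : ℝ) * (g * star g').re else 0 := by
  set kM : ℤ := σ * ((p.1 : ℤ) - (p'.1 : ℤ)) with hkM
  set kN : ℤ := σ * ((p.2 : ℤ) - (p'.2 : ℤ)) with hkN
  have hstep : ∀ (a : Fin M) (b : Fin N),
      ((qexp qI ((σ : ℝ) * (2 * Real.pi * p.1.val * a.val / M)) * g *
          qexp qJ ((σ : ℝ) * (2 * Real.pi * p.2.val * b.val / N))) *
        star (qexp qI ((σ : ℝ) * (2 * Real.pi * p'.1.val * a.val / M)) * g' *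
          qexp qJ ((σ : ℝ) * (2 * Real.pi * p'.2.val * b.val / N)))).re
      = (qexp qI (2 * Real.pi * kM * a / M) *
          (g * (qexp qJ (2 * Real.pi * kN * b / N) * star g'))).re := by
    intro a b
    rw [key_term]
    congr 2
    · congr 1
      rw [hkM]
      push_cast
      ring
    · congr 2
      rw [hkN]
      push_cast
      ring
  rw [Finset.sum_congr rfl (fun a _ => Finset.sum_congr rfl (fun b _ => hstep a b)),
    orth_sum M N hM hN kM kN g g']
  have hdM : (M : ℤ) ∣ kM ↔ p.1 = p'.1 := by
    rw [hkM]
    rcases hσ with h | h <;> rw [h]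
    · simpa using fin_dvd_iff M p.1 p'.1
    · rw [neg_one_mul, Int.dvd_neg]
      exact fin_dvd_iff M p.1 p'.1
  have hdN : (N : ℤ) ∣ kN ↔ p.2 = p'.2 := by
    rw [hkN]
    rcases hσ with h | h <;> rw [h]
    · simpa using fin_dvd_iff N p.2 p'.2
    · rw [neg_one_mul, Int.dvd_neg]
      exact fin_dvd_iff N p.2 p'.2
  have hpp' : (p = p') ↔ (p.1 = p'.1 ∧ p.2 = p'.2) := Prod.ext_iff
  by_cases h1 : p.1 = p'.1 <;> by_cases h2 : p.2 = p'.2 <;>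
    simp [hpp', h1, h2, hdM, hdN] <;> ring

lemma sum_swap4 {α β γ : Type*} [Fintype α] [Fintype β] (S T : Finset γ)
    (F : α → β → γ → γ → ℝ) :
    ∑ a : α, ∑ b : β, ∑ p ∈ S, ∑ q ∈ T, F a b p q
      = ∑ p ∈ S, ∑ q ∈ T, ∑ a : α, ∑ b : β, F a b p q := by
  calc ∑ a : α, ∑ b : β, ∑ p ∈ S, ∑ q ∈ T, F a b p q
      = ∑ a : α, ∑ p ∈ S, ∑ b : β, ∑ q ∈ T, F a b p q :=
        Finset.sum_congr rfl (fun a _ => Finset.sum_comm)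
    _ = ∑ p ∈ S, ∑ a : α, ∑ b : β, ∑ q ∈ T, F a b p q := Finset.sum_comm
    _ = ∑ p ∈ S, ∑ a : α, ∑ q ∈ T, ∑ b : β, F a b p q :=
        Finset.sum_congr rfl (fun p _ => Finset.sum_congr rfl (fun a _ => Finset.sum_comm))
    _ = ∑ p ∈ S, ∑ q ∈ T, ∑ a : α, ∑ b : β, F a b p q :=
        Finset.sum_congr rfl (fun p _ => Finset.sum_comm)

lemma norm_sq_eq_re_mul_star (q : Quaternion ℝ) : ‖q‖ ^ 2 = (q * star q).re := by
  rw [sq, ← Quaternion.normSq_eq_norm_mul_self]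
  rfl

lemma lemmaP (M N : ℕ) (hM : 0 < M) (hN : 0 < N) (σ : ℤ) (hσ : σ = 1 ∨ σ = -1)
    (S : Finset (Fin M × Fin N)) (g : Fin M × Fin N → Quaternion ℝ) :
    ∑ a : Fin M, ∑ b : Fin N,
      ‖∑ p ∈ S, qexp qI ((σ : ℝ) * (2 * Real.pi * p.1.val * a.val / M)) * g p *
        qexp qJ ((σ : ℝ) * (2 * Real.pi * p.2.val * b.val / N))‖ ^ 2
      = (M * N : ℝ) * ∑ p ∈ S, ‖g p‖ ^ 2 := by
  have expand : ∀ (a : Fin M) (b : Fin N),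
      ‖∑ p ∈ S, qexp qI ((σ : ℝ) * (2 * Real.pi * p.1.val * a.val / M)) * g p *
        qexp qJ ((σ : ℝ) * (2 * Real.pi * p.2.val * b.val / N))‖ ^ 2
      = ∑ p ∈ S, ∑ p' ∈ S,
          ((qexp qI ((σ : ℝ) * (2 * Real.pi * p.1.val * a.val / M)) * g p *
              qexp qJ ((σ : ℝ) * (2 * Real.pi * p.2.val * b.val / N))) *
            star (qexp qI ((σ : ℝ) * (2 * Real.pi * p'.1.val * a.val / M)) * g p' *
              qexp qJ ((σ : ℝ) * (2 * Real.pi * p'.2.val * b.val / N)))).re := by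
    intro a b
    rw [norm_sq_eq_re_mul_star, star_sum, Finset.sum_mul_sum, q_re_sum]
    exact Finset.sum_congr rfl (fun p _ => q_re_sum _ _)
  calc ∑ a : Fin M, ∑ b : Fin N,
      ‖∑ p ∈ S, qexp qI ((σ : ℝ) * (2 * Real.pi * p.1.val * a.val / M)) * g p *
        qexp qJ ((σ : ℝ) * (2 * Real.pi * p.2.val * b.val / N))‖ ^ 2
      = ∑ p ∈ S, ∑ p' ∈ S, ∑ a : Fin M, ∑ b : Fin N,
          ((qexp qI ((σ : ℝ) * (2 * Real.pi * p.1.val * a.val / M)) * g p *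
              qexp qJ ((σ : ℝ) * (2 * Real.pi * p.2.val * b.val / N))) *
            star (qexp qI ((σ : ℝ) * (2 * Real.pi * p'.1.val * a.val / M)) * g p' *
              qexp qJ ((σ : ℝ) * (2 * Real.pi * p'.2.val * b.val / N)))).re := by
        rw [Finset.sum_congr rfl (fun a _ => Finset.sum_congr rfl (fun b _ => expand a b))]
        exact sum_swap4 S S _
    _ = ∑ p ∈ S, ∑ p' ∈ S, (if p = p' then (M * N : ℝ) * (g p * star (g p')).re else 0) := by
        exact Finset.sum_congr rfl (fun p _ => Finset.sum_congr rfl (fun p' _ =>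
          block M N hM hN σ hσ p p' (g p) (g p')))
    _ = (M * N : ℝ) * ∑ p ∈ S, ‖g p‖ ^ 2 := by
        rw [Finset.mul_sum]
        refine Finset.sum_congr rfl (fun p hp => ?_)
        rw [Finset.sum_ite_eq S p (fun p' => (M * N : ℝ) * (g p * star (g p')).re), if_pos hp,
          norm_sq_eq_re_mul_star]

lemma sqrtMN_sq (M N : ℕ) (hM : 0 < M) (hN : 0 < N) :
    ((Real.sqrt (M * N))⁻¹) ^ 2 = ((M : ℝ) * N)⁻¹ := by
  rw [← Real.sqrt_inv, Real.sq_sqrt (by positivity)]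

/-- Plancherel: the DQFT preserves the total energy. -/

lemma dqft_plancherel (M N : ℕ) (hM : 0 < M) (hN : 0 < N)
    (h : Fin M → Fin N → Quaternion ℝ) :
    ∑ u : Fin M, ∑ v : Fin N, ‖dqft M N h u v‖ ^ 2
      = ∑ t : Fin M, ∑ s : Fin N, ‖h t s‖ ^ 2 := by
  have key := lemmaP M N hM hN (-1) (Or.inr rfl) Finset.univ
    (fun p : Fin M × Fin N => h p.1 p.2)
  have hterm : ∀ (u : Fin M) (v : Fin N), ‖dqft M N h u v‖ ^ 2
      = ((Real.sqrt (M * N))⁻¹) ^ 2 *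
        ‖∑ p : Fin M × Fin N,
          qexp qI (((-1 : ℤ) : ℝ) * (2 * Real.pi * p.1.val * u.val / M)) * h p.1 p.2 *
            qexp qJ (((-1 : ℤ) : ℝ) * (2 * Real.pi * p.2.val * v.val / N))‖ ^ 2 := by
    intro u v
    have hsum : ∑ p : Fin M × Fin N,
        qexp qI (((-1 : ℤ) : ℝ) * (2 * Real.pi * p.1.val * u.val / M)) * h p.1 p.2 *
          qexp qJ (((-1 : ℤ) : ℝ) * (2 * Real.pi * p.2.val * v.val / N))
        = ∑ t : Fin M, ∑ s : Fin N,
            qexp qI (-(2 * Real.pi * u.val * t.val / M)) * h t s *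
              qexp qJ (-(2 * Real.pi * v.val * s.val / N)) := by
      rw [Fintype.sum_prod_type]
      refine Finset.sum_congr rfl (fun t _ => Finset.sum_congr rfl (fun s _ => ?_))
      congr 2
      · congr 1
        push_cast
        ring
      · congr 1
        push_cast
        ring
    rw [dqft, norm_smul, mul_pow, hsum, Real.norm_eq_abs, sq_abs]
  rw [Finset.sum_congr rfl (fun u _ => Finset.sum_congr rfl (fun v _ => hterm u v))]
  simp only [← Finset.mul_sum]
  have hMN : ((M : ℝ) * N) ≠ 0 := by positivity
  rw [key, sqrtMN_sq M N hM hN, ← mul_assoc, inv_mul_cancel₀ hMN, one_mul,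
    Fintype.sum_prod_type]

lemma bandpass_energy (M N : ℕ) (hM : 0 < M) (hN : 0 < N)
    (Ω : Finset (Fin M × Fin N)) (h : Fin M → Fin N → Quaternion ℝ) :
    ∑ t : Fin M, ∑ s : Fin N, ‖bandpass M N Ω h t s‖ ^ 2
      = ∑ p ∈ Ω, ‖dqft M N h p.1 p.2‖ ^ 2 := by
  have key := lemmaP M N hM hN 1 (Or.inl rfl) Ω
    (fun p : Fin M × Fin N => dqft M N h p.1 p.2)
  have hterm : ∀ (t : Fin M) (s : Fin N), ‖bandpass M N Ω h t s‖ ^ 2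
      = ((Real.sqrt (M * N))⁻¹) ^ 2 *
        ‖∑ p ∈ Ω,
          qexp qI (((1 : ℤ) : ℝ) * (2 * Real.pi * p.1.val * t.val / M)) * dqft M N h p.1 p.2 *
            qexp qJ (((1 : ℤ) : ℝ) * (2 * Real.pi * p.2.val * s.val / N))‖ ^ 2 := by
    intro t s
    have hsum : ∑ p ∈ Ω,
        qexp qI (((1 : ℤ) : ℝ) * (2 * Real.pi * p.1.val * t.val / M)) * dqft M N h p.1 p.2 *
          qexp qJ (((1 : ℤ) : ℝ) * (2 * Real.pi * p.2.val * s.val / N))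
        = ∑ p ∈ Ω,
            qexp qI (2 * Real.pi * p.1.val * t.val / M) * dqft M N h p.1 p.2 *
              qexp qJ (2 * Real.pi * p.2.val * s.val / N) := by
      refine Finset.sum_congr rfl (fun p _ => ?_)
      norm_num
    rw [bandpass, norm_smul, mul_pow, hsum, Real.norm_eq_abs, sq_abs]
  rw [Finset.sum_congr rfl (fun t _ => Finset.sum_congr rfl (fun s _ => hterm t s))]
  simp only [← Finset.mul_sum]
  have hMN : ((M : ℝ) * N) ≠ 0 := by positivity
  rw [key, sqrtMN_sq M N hM hN, ← mul_assoc, inv_mul_cancel₀ hMN, one_mul]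

lemma dqft_coeff_bound (M N : ℕ) (hM : 0 < M) (hN : 0 < N)
    (h : Fin M → Fin N → Quaternion ℝ) (T : Finset (Fin M × Fin N))
    (hT : ∀ p : Fin M × Fin N, p ∉ T → h p.1 p.2 = 0) (u : Fin M) (v : Fin N) :
    ‖dqft M N h u v‖ ^ 2
      ≤ (T.card : ℝ) / ((M : ℝ) * N) * ∑ t : Fin M, ∑ s : Fin N, ‖h t s‖ ^ 2 := by
  have hc : (0:ℝ) ≤ (Real.sqrt ((M:ℝ)*N))⁻¹ := by positivity
  have h1 : ‖dqft M N h u v‖ ≤ (Real.sqrt ((M:ℝ)*N))⁻¹ * ∑ p ∈ T, ‖h p.1 p.2‖ := by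
    rw [dqft, norm_smul, Real.norm_eq_abs, abs_of_nonneg hc]
    refine mul_le_mul_of_nonneg_left ?_ hc
    have step1 : ‖∑ t : Fin M, ∑ s : Fin N,
        qexp qI (-(2 * Real.pi * u.val * t.val / M)) * h t s *
          qexp qJ (-(2 * Real.pi * v.val * s.val / N))‖
        ≤ ∑ t : Fin M, ∑ s : Fin N, ‖h t s‖ := by
      refine (norm_sum_le _ _).trans (Finset.sum_le_sum (fun t _ => ?_))
      refine (norm_sum_le _ _).trans (Finset.sum_le_sum (fun s _ => ?_))
      rw [norm_mul, norm_mul, norm_qexp_qI, norm_qexp_qJ, one_mul, mul_one]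
    have step2 : ∑ t : Fin M, ∑ s : Fin N, ‖h t s‖ = ∑ p ∈ T, ‖h p.1 p.2‖ := by
      have e1 : ∑ t : Fin M, ∑ s : Fin N, ‖h t s‖
          = ∑ p : Fin M × Fin N, ‖h p.1 p.2‖ :=
        (Fintype.sum_prod_type (f := fun p : Fin M × Fin N => ‖h p.1 p.2‖)).symm
      rw [e1]
      exact (Finset.sum_subset (Finset.subset_univ T)
        (fun p _ hp => by rw [hT p hp, norm_zero])).symm
    rw [step2] at step1
    exact step1
  have h2 : ‖dqft M N h u v‖ ^ 2
      ≤ ((M : ℝ) * N)⁻¹ * (∑ p ∈ T, ‖h p.1 p.2‖) ^ 2 := by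
    calc ‖dqft M N h u v‖ ^ 2
        ≤ ((Real.sqrt ((M:ℝ)*N))⁻¹ * ∑ p ∈ T, ‖h p.1 p.2‖) ^ 2 := by
          apply pow_le_pow_left₀ (norm_nonneg _) h1
      _ = ((M : ℝ) * N)⁻¹ * (∑ p ∈ T, ‖h p.1 p.2‖) ^ 2 := by
          rw [mul_pow, sqrtMN_sq M N hM hN]
  have h3 : (∑ p ∈ T, ‖h p.1 p.2‖) ^ 2 ≤ (T.card : ℝ) * ∑ p ∈ T, ‖h p.1 p.2‖ ^ 2 :=
    sq_sum_le_card_mul_sum_sq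
  have h4 : ∑ p ∈ T, ‖h p.1 p.2‖ ^ 2 ≤ ∑ t : Fin M, ∑ s : Fin N, ‖h t s‖ ^ 2 := by
    have e1 : ∑ t : Fin M, ∑ s : Fin N, ‖h t s‖ ^ 2
        = ∑ p : Fin M × Fin N, ‖h p.1 p.2‖ ^ 2 :=
      (Fintype.sum_prod_type (f := fun p : Fin M × Fin N => ‖h p.1 p.2‖ ^ 2)).symm
    rw [e1]
    exact Finset.sum_le_sum_of_subset_of_nonneg (Finset.subset_univ T)
      (fun p _ _ => by positivity)
  have hMN : (0:ℝ) < (M : ℝ) * N := by positivity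
  calc ‖dqft M N h u v‖ ^ 2
      ≤ ((M : ℝ) * N)⁻¹ * (∑ p ∈ T, ‖h p.1 p.2‖) ^ 2 := h2
    _ ≤ ((M : ℝ) * N)⁻¹ * ((T.card : ℝ) * ∑ p ∈ T, ‖h p.1 p.2‖ ^ 2) := by
        apply mul_le_mul_of_nonneg_left h3 (by positivity)
    _ ≤ ((M : ℝ) * N)⁻¹ * ((T.card : ℝ) * ∑ t : Fin M, ∑ s : Fin N, ‖h t s‖ ^ 2) := by
        apply mul_le_mul_of_nonneg_left _ (by positivity)
        apply mul_le_mul_of_nonneg_left h4 (by positivity)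
    _ = (T.card : ℝ) / ((M : ℝ) * N) * ∑ t : Fin M, ∑ s : Fin N, ‖h t s‖ ^ 2 := by
        field_simp

lemma dqft_sub (M N : ℕ) (f g : Fin M → Fin N → Quaternion ℝ) (u : Fin M) (v : Fin N) :
    dqft M N (fun t s => f t s - g t s) u v = dqft M N f u v - dqft M N g u v := by
  rw [dqft, dqft, dqft, ← smul_sub]
  congr 1
  rw [← Finset.sum_sub_distrib]
  refine Finset.sum_congr rfl (fun t _ => ?_)
  rw [← Finset.sum_sub_distrib]
  refine Finset.sum_congr rfl (fun s _ => ?_)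
  rw [mul_sub, sub_mul]

lemma bandpass_sub (M N : ℕ) (Ω : Finset (Fin M × Fin N))
    (f g : Fin M → Fin N → Quaternion ℝ) (t : Fin M) (s : Fin N) :
    bandpass M N Ω (fun t s => f t s - g t s) t s
      = bandpass M N Ω f t s - bandpass M N Ω g t s := by
  rw [bandpass, bandpass, bandpass, ← smul_sub]
  congr 1
  rw [← Finset.sum_sub_distrib]
  refine Finset.sum_congr rfl (fun p _ => ?_)
  rw [dqft_sub, mul_sub, sub_mul]

lemma l2norm_nonneg (M N : ℕ) (f : Fin M → Fin N → Quaternion ℝ) :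
    0 ≤ l2norm M N f := Real.sqrt_nonneg _

lemma l2norm_sq (M N : ℕ) (f : Fin M → Fin N → Quaternion ℝ) :
    (l2norm M N f) ^ 2 = ∑ t : Fin M, ∑ s : Fin N, ‖f t s‖ ^ 2 := by
  rw [l2norm, Real.sq_sqrt]
  positivity

lemma l2norm_eq_norm (M N : ℕ) (f : Fin M → Fin N → Quaternion ℝ) :
    l2norm M N f = ‖(WithLp.equiv 2 (Fin M × Fin N → ℝ)).symm
      (fun p : Fin M × Fin N => ‖f p.1 p.2‖)‖ := by
  rw [l2norm, EuclideanSpace.norm_eq]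
  congr 1
  rw [← Fintype.sum_prod_type (f := fun p : Fin M × Fin N => ‖f p.1 p.2‖ ^ 2)]
  refine Finset.sum_congr rfl (fun p _ => ?_)
  rw [WithLp.equiv_symm_apply, PiLp.toLp_apply, Real.norm_eq_abs, sq_abs]

lemma l2norm_add_le (M N : ℕ) (a b : Fin M → Fin N → Quaternion ℝ) :
    l2norm M N (fun t s => a t s + b t s) ≤ l2norm M N a + l2norm M N b := by
  rw [l2norm_eq_norm, l2norm_eq_norm, l2norm_eq_norm]
  set va := (WithLp.equiv 2 (Fin M × Fin N → ℝ)).symm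
      (fun p : Fin M × Fin N => ‖a p.1 p.2‖) with hva
  set vb := (WithLp.equiv 2 (Fin M × Fin N → ℝ)).symm
      (fun p : Fin M × Fin N => ‖b p.1 p.2‖) with hvb
  have hle : ‖(WithLp.equiv 2 (Fin M × Fin N → ℝ)).symm
      (fun p : Fin M × Fin N => ‖a p.1 p.2 + b p.1 p.2‖)‖ ≤ ‖va + vb‖ := by
    rw [EuclideanSpace.norm_eq, EuclideanSpace.norm_eq]
    apply Real.sqrt_le_sqrt
    refine Finset.sum_le_sum (fun p _ => ?_)
    simp only [WithLp.equiv_symm_apply, PiLp.toLp_apply, PiLp.add_apply, Real.norm_eq_abs, sq_abs, hva, hvb,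
      WithLp.equiv_symm_apply, PiLp.toLp_apply]
    apply pow_le_pow_left₀ (norm_nonneg _) (norm_add_le _ _)
  exact hle.trans (norm_add_le va vb)

lemma l2norm_neg (M N : ℕ) (a : Fin M → Fin N → Quaternion ℝ) :
    l2norm M N (fun t s => -(a t s)) = l2norm M N a := by
  rw [l2norm, l2norm]
  congr 1
  simp [norm_neg]

/-- Stable sparse recovery in the presence of noise. -/
theorem sparse_recovery_stable (M N : ℕ) (hM : 0 < M) (hN : 0 < N)
    (Ω : Finset (Fin M × Fin N)) (Nω Nt : ℕ)
    (hNω : Nω = (Finset.univ \ Ω).card) (hNt : 0 < Nt)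
    (hup : 2 * Nt * Nω < M * N)
    (f n r ftilde : Fin M → Fin N → Quaternion ℝ) (ε : ℝ)
    (hf : (Finset.univ.filter (fun p : Fin M × Fin N => f p.1 p.2 ≠ 0)).card ≤ Nt)
    (hn : l2norm M N n ≤ ε)
    (hr : ∀ (t : Fin M) (s : Fin N), r t s = bandpass M N Ω f t s + n t s)
    (hftilde : (Finset.univ.filter (fun p : Fin M × Fin N => ftilde p.1 p.2 ≠ 0)).card ≤ Nt)
    (hfit : l2norm M N (fun t s => r t s - bandpass M N Ω ftilde t s) ≤ ε) :
    l2norm M N (fun t s => f t s - ftilde t s) ≤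
      2 * ε / Real.sqrt (1 - 2 * Nt * Nω / (M * N)) := by
  have hε : 0 ≤ ε := le_trans (l2norm_nonneg M N n) hn
  set h : Fin M → Fin N → Quaternion ℝ := fun t s => f t s - ftilde t s with hh
  set H2 : ℝ := ∑ t : Fin M, ∑ s : Fin N, ‖h t s‖ ^ 2 with hH2
  have hH2nonneg : 0 ≤ H2 := by rw [hH2]; positivity
  -- support bound
  set T : Finset (Fin M × Fin N) := Finset.univ.filter (fun p => h p.1 p.2 ≠ 0) with hT
  have hTzero : ∀ p : Fin M × Fin N, p ∉ T → h p.1 p.2 = 0 := by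
    intro p hp
    simp only [hT, Finset.mem_filter, Finset.mem_univ, true_and, not_not] at hp
    exact hp
  have hTcard : (T.card : ℝ) ≤ 2 * Nt := by
    have hsub : T ⊆ (Finset.univ.filter (fun p : Fin M × Fin N => f p.1 p.2 ≠ 0))
        ∪ (Finset.univ.filter (fun p : Fin M × Fin N => ftilde p.1 p.2 ≠ 0)) := by
      intro p hp
      simp only [hT, Finset.mem_filter, Finset.mem_univ, true_and] at hp
      simp only [Finset.mem_union, Finset.mem_filter, Finset.mem_univ, true_and]
      by_contra hc
      push_neg at hc
      apply hp
      rw [hh]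
      simp [hc.1, hc.2]
    have h1 := (Finset.card_le_card hsub).trans (Finset.card_union_le _ _)
    have h2 := h1.trans (add_le_add hf hftilde)
    have : T.card ≤ 2 * Nt := by omega
    exact_mod_cast this
  -- Plancherel split
  have hplan : H2 = (∑ p ∈ Finset.univ \ Ω, ‖dqft M N h p.1 p.2‖ ^ 2)
      + ∑ p ∈ Ω, ‖dqft M N h p.1 p.2‖ ^ 2 := by
    rw [Finset.sum_sdiff (Finset.subset_univ Ω)]
    rw [Fintype.sum_prod_type (f := fun p : Fin M × Fin N => ‖dqft M N h p.1 p.2‖ ^ 2)]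
    rw [hH2, dqft_plancherel M N hM hN h]
  -- tail bound
  have htail : ∑ p ∈ Finset.univ \ Ω, ‖dqft M N h p.1 p.2‖ ^ 2
      ≤ (Nω : ℝ) * ((2 * Nt : ℝ) / ((M : ℝ) * N) * H2) := by
    have hbound : ∀ p ∈ Finset.univ \ Ω,
        ‖dqft M N h p.1 p.2‖ ^ 2 ≤ (2 * Nt : ℝ) / ((M : ℝ) * N) * H2 := by
      intro p _
      refine (dqft_coeff_bound M N hM hN h T hTzero p.1 p.2).trans ?_
      rw [← hH2]
      apply mul_le_mul_of_nonneg_right _ hH2nonneg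
      exact (div_le_div_iff_of_pos_right (by positivity)).2 hTcard
    have := Finset.sum_le_card_nsmul (Finset.univ \ Ω) _ _ hbound
    rw [nsmul_eq_mul] at this
    rw [← hNω] at this
    exact this
  -- head bound
  have hpt : ∀ (t : Fin M) (s : Fin N),
      bandpass M N Ω h t s = (r t s - bandpass M N Ω ftilde t s) + (-(n t s)) := by
    intro t s
    rw [hh, bandpass_sub, hr t s]
    abel
  have hhead_norm : l2norm M N (fun t s => bandpass M N Ω h t s) ≤ 2 * ε := by
    have e1 : (fun t s => bandpass M N Ω h t s)
        = fun t s => (r t s - bandpass M N Ω ftilde t s) + (-(n t s)) := by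
      funext t s
      exact hpt t s
    rw [e1]
    refine (l2norm_add_le M N _ _).trans ?_
    rw [l2norm_neg]
    linarith
  have hhead : ∑ p ∈ Ω, ‖dqft M N h p.1 p.2‖ ^ 2 ≤ (2 * ε) ^ 2 := by
    rw [← bandpass_energy M N hM hN Ω h]
    have e2 : ∑ t : Fin M, ∑ s : Fin N, ‖bandpass M N Ω h t s‖ ^ 2
        = (l2norm M N (fun t s => bandpass M N Ω h t s)) ^ 2 := (l2norm_sq M N _).symm
    rw [e2]
    apply pow_le_pow_left₀ (l2norm_nonneg M N _) hhead_norm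
  -- combine
  set c : ℝ := 2 * (Nt : ℝ) * (Nω : ℝ) / ((M : ℝ) * (N : ℝ)) with hc
  have hc1 : c < 1 := by
    rw [hc, div_lt_one (by positivity)]
    exact_mod_cast hup
  have hc0 : 0 ≤ c := by rw [hc]; positivity
  have h1c : 0 < 1 - c := by linarith
  have hkey : H2 ≤ (2 * ε) ^ 2 + c * H2 := by
    have e3 : (Nω : ℝ) * ((2 * Nt : ℝ) / ((M : ℝ) * N) * H2) = c * H2 := by
      rw [hc]
      ring
    rw [e3] at htail
    linarith [hplan, htail, hhead]
  have hH2le : H2 ≤ (2 * ε) ^ 2 / (1 - c) := by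
    rw [le_div_iff₀ h1c]
    nlinarith
  have hfinal : l2norm M N h ≤ Real.sqrt ((2 * ε) ^ 2 / (1 - c)) := by
    rw [l2norm, ← hH2]
    exact Real.sqrt_le_sqrt hH2le
  have hsqrt : Real.sqrt ((2 * ε) ^ 2 / (1 - c)) = 2 * ε / Real.sqrt (1 - c) := by
    rw [Real.sqrt_div (by positivity), Real.sqrt_sq (by linarith)]
  rw [hsqrt] at hfinal
  exact hfinal
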